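/- arXiv:1811.04485 — 3 statements merged into one kernel-verified Lean document; each statement's English description precedes it below -/
import Mathlib

section
/- Let Σ be a simplicial complex, let Σ' ⊆ Σ be upward closed in Σ, and let (σ, τ) be a coreduction pair in Σ'. Then excising the pair does not modify the immediate coboundary of any remaining simplex: for every ρ ∈ Σ' \ {σ, τ}, cbd_{Σ' \ {σ, τ}}(ρ) = cbd_{Σ'}(ρ). (Lemma 1: in a coreduction-based algorithm, each removal operation does not modify the coboundary of the remaining simplices.) -/
open Finset

variable {α : Type*}

/-- `σ` is an immediate face of `τ`. -/
def ImmFace (σ τ : Finset α) : Prop :=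
  σ ⊆ τ ∧ σ.card + 1 = τ.card

/-- A simplicial complex: a family of nonempty finsets closed under nonempty subsets. -/
def IsComplex (S : Set (Finset α)) : Prop :=
  (∀ σ ∈ S, σ.Nonempty) ∧ ∀ τ ∈ S, ∀ σ : Finset α, σ ⊆ τ → σ.Nonempty → σ ∈ S

/-- Immediate boundary of `τ` in the family `S`. -/
def bd (S : Set (Finset α)) (τ : Finset α) : Set (Finset α) :=
  {σ ∈ S | ImmFace σ τ}

/-- Immediate coboundary of `σ` in the family `S`. -/
def cbd (S : Set (Finset α)) (σ : Finset α) : Set (Finset α) :=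
  {τ ∈ S | ImmFace σ τ}

/-- `(σ, τ)` is a coreduction pair in `S`. -/
def CoredPair (S : Set (Finset α)) (σ τ : Finset α) : Prop :=
  σ ∈ S ∧ τ ∈ S ∧ ImmFace σ τ ∧ bd S τ = {σ}

/-- `(σ, τ)` is a reduction pair in `S`. -/
def RedPair (S : Set (Finset α)) (σ τ : Finset α) : Prop :=
  σ ∈ S ∧ τ ∈ S ∧ ImmFace σ τ ∧ cbd S σ = {τ}

/-- `σ` is a free simplex in `S`. -/
def FreeSimplex (S : Set (Finset α)) (σ : Finset α) : Prop :=
  σ ∈ S ∧ bd S σ = ∅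

/-- `σ` is a top simplex in `S`. -/
def TopSimplex (S : Set (Finset α)) (σ : Finset α) : Prop :=
  σ ∈ S ∧ cbd S σ = ∅

/-- `S'` is an upward-closed subfamily of `S`. -/
def UpClosedIn (S S' : Set (Finset α)) : Prop :=
  S' ⊆ S ∧ ∀ σ ∈ S', ∀ τ ∈ S, σ ⊆ τ → τ ∈ S'

/-- An operation: removal of a pair of simplices, or of a single simplex. -/
abbrev Op (α : Type*) := (Finset α × Finset α) ⊕ Finset α

/-- Excise the simplices of an operation from a family. -/
def removeOp (S : Set (Finset α)) : Op α → Set (Finset α)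
  | Sum.inl (σ, τ) => S \ {σ, τ}
  | Sum.inr σ => S \ {σ}

/-- Remaining family after performing a list of operations in order. -/
def remaining (S : Set (Finset α)) (L : List (Op α)) : Set (Finset α) :=
  L.foldl removeOp S

/-- A coreduction-based removal sequence: every pair is a coreduction pair and
every single simplex is free, in the current remaining family. -/
def IsCoredSeq (S : Set (Finset α)) : List (Op α) → Prop
  | [] => True
  | o :: L =>
      (match o with
        | Sum.inl (σ, τ) => CoredPair S σ τ
        | Sum.inr σ => FreeSimplex S σ) ∧ IsCoredSeq (removeOp S o) L

/-- A reduction-based removal sequence: every pair is a reduction pair and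
every single simplex is top, in the current remaining family. -/
def IsRedSeq (S : Set (Finset α)) : List (Op α) → Prop
  | [] => True
  | o :: L =>
      (match o with
        | Sum.inl (σ, τ) => RedPair S σ τ
        | Sum.inr σ => TopSimplex S σ) ∧ IsRedSeq (removeOp S o) L

/-- A valid interleaved removal sequence: every pair is a coreduction or
reduction pair, and every single simplex is free or top, in the current
remaining family. -/
def IsInterSeq (S : Set (Finset α)) : List (Op α) → Prop
  | [] => True
  | o :: L =>
      (match o with
        | Sum.inl (σ, τ) => CoredPair S σ τ ∨ RedPair S σ τ
        | Sum.inr σ => FreeSimplex S σ ∨ TopSimplex S σ) ∧ IsInterSeq (removeOp S o) L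

/-- A discrete vector field on `S`: pairs (face, immediate coface) of simplices of `S`,
each simplex of `S` belonging to at most one pair. -/
def IsDVF (S : Set (Finset α)) (V : Set (Finset α × Finset α)) : Prop :=
  (∀ p ∈ V, p.1 ∈ S ∧ p.2 ∈ S ∧ ImmFace p.1 p.2) ∧
  ∀ σ ∈ S, ∀ p ∈ V, ∀ q ∈ V,
    (σ = p.1 ∨ σ = p.2) → (σ = q.1 ∨ σ = q.2) → p = q

/-- A `V`-path: a nonempty sequence of pairs of `V` such that each `σ_{i+1}` is an
immediate face of `τ_i` different from `σ_i`. -/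
def IsVPath (V : Set (Finset α × Finset α)) (P : List (Finset α × Finset α)) : Prop :=
  P ≠ [] ∧ (∀ p ∈ P, p ∈ V) ∧
  P.Chain' (fun p q => ImmFace q.1 p.2 ∧ q.1 ≠ p.1)

/-- A closed `V`-path: `σ_1` is an immediate face of `τ_r` different from `σ_r`. -/
def IsClosedVPath (V : Set (Finset α × Finset α))
    (P : List (Finset α × Finset α)) : Prop :=
  ∃ hne : P ≠ [], IsVPath V P ∧
    ImmFace (P.head hne).1 (P.getLast hne).2 ∧
    (P.head hne).1 ≠ (P.getLast hne).1

/-- The lower star of a vertex `v` with respect to a vertex function `F`. -/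
def lowerStar (S : Set (Finset α)) (F : α → ℝ) (v : α) : Set (Finset α) :=
  {σ ∈ S | v ∈ σ ∧ ∀ w ∈ σ, F v ≤ F w}

namespace ImmFace

variable {ρ σ τ : Finset α}

theorem exists_mem_notMem (h : ImmFace σ τ) : ∃ t ∈ τ, t ∉ σ :=
  Finset.exists_mem_notMem_of_card_lt_card (by have := h.2; omega)

theorem exists_ne_intermediate (hρσ : ImmFace ρ σ) (hστ : ImmFace σ τ) :
    ∃ ν, ImmFace ρ ν ∧ ImmFace ν τ ∧ ν ≠ σ := by
  obtain ⟨t, htτ, htσ⟩ := hστ.exists_mem_notMem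
  have htρ : t ∉ ρ := fun ht => htσ (hρσ.1 ht)
  refine ⟨ρ.cons t htρ, ⟨subset_cons htρ, (card_cons htρ).symm⟩,
    ⟨cons_subset.2 ⟨htτ, hρσ.1.trans hστ.1⟩, ?_⟩, ?_⟩
  · rw [card_cons, hρσ.2, hστ.2]
  · exact fun hν => htσ (hν ▸ mem_cons_self t ρ)

end ImmFace

theorem UpClosedIn.mem_of_subset_of_subset {S S' : Set (Finset α)} (hS : IsComplex S)
    (hup : UpClosedIn S S') {ρ ν τ : Finset α} (hρ : ρ ∈ S') (hτ : τ ∈ S')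
    (hρν : ρ ⊆ ν) (hντ : ν ⊆ τ) (hν : ν.Nonempty) : ν ∈ S' :=
  hup.2 ρ hρ ν (hS.2 τ (hup.1 hτ) ν hντ hν) hρν

theorem cbd_diff_of_forall_not_immFace {S T : Set (Finset α)} {ρ : Finset α}
    (hT : ∀ μ ∈ T, ¬ImmFace ρ μ) : cbd (S \ T) ρ = cbd S ρ := by
  ext μ
  exact ⟨fun hμ => ⟨hμ.1.1, hμ.2⟩, fun hμ => ⟨⟨hμ.1, fun hμT => hT μ hμT hμ.2⟩, hμ.2⟩⟩

namespace CoredPair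

variable {S S' : Set (Finset α)} {ρ σ τ : Finset α}

theorem not_immFace_snd (h : CoredPair S' σ τ) (hρ : ρ ∈ S') (hρσ : ρ ≠ σ) :
    ¬ImmFace ρ τ := by
  intro hρτ
  have hρbd : ρ ∈ bd S' τ := ⟨hρ, hρτ⟩
  rw [h.2.2.2] at hρbd
  exact hρσ hρbd

/-- If `ρ ⋖ σ ⋖ τ`, the second intermediate face between `ρ` and `τ` lies in `S'` by upward
closure, contradicting `bd S' τ = {σ}`. -/
theorem not_immFace_fst (hS : IsComplex S) (hup : UpClosedIn S S') (h : CoredPair S' σ τ)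
    (hρ : ρ ∈ S') : ¬ImmFace ρ σ := by
  intro hρσ
  obtain ⟨-, hτ, hστ, hbd⟩ := h
  obtain ⟨ν, hρν, hντ, hνσ⟩ := hρσ.exists_ne_intermediate hστ
  have hν : ν ∈ S' := hup.mem_of_subset_of_subset hS hρ hτ hρν.1 hντ.1
    (card_pos.1 (by have := hρν.2; omega))
  have hνbd : ν ∈ bd S' τ := ⟨hν, hντ⟩
  rw [hbd] at hνbd
  exact hνσ hνbd

end CoredPair

theorem coreduction_preserves_coboundary_general {α : Type*}
    (S S' : Set (Finset α)) (hS : IsComplex S) (hup : UpClosedIn S S')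
    (σ τ : Finset α) (h : CoredPair S' σ τ) :
    ∀ ρ ∈ S' \ {σ, τ}, cbd (S' \ {σ, τ}) ρ = cbd S' ρ := by
  rintro ρ ⟨hρ, hρστ⟩
  apply cbd_diff_of_forall_not_immFace
  rintro μ (rfl | rfl)
  · exact h.not_immFace_fst hS hup hρ
  · exact h.not_immFace_snd hρ fun hρσ => hρστ (.inl hρσ)

/-- Lemma 1: excising a coreduction pair from an upward-closed subfamily of a
simplicial complex does not modify the immediate coboundary of any remaining
simplex. -/
theorem coreduction_preserves_coboundary {α : Type*} [DecidableEq α]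
    (S S' : Set (Finset α)) (hS : IsComplex S) (hup : UpClosedIn S S')
    (σ τ : Finset α) (h : CoredPair S' σ τ) :
    ∀ ρ ∈ S' \ {σ, τ}, cbd (S' \ {σ, τ}) ρ = cbd S' ρ :=
  coreduction_preserves_coboundary_general S S' hS hup σ τ h
end

section
/- Let Σ be a finite simplicial complex and let L be an exhausting coreduction-based removal sequence on Σ. Then the reversed list of L is an exhausting reduction-based removal sequence on Σ: starting again from remaining family Σ, each pair occurring in the reversed list is a reduction pair in the current remaining family, and each single simplex occurring in the reversed list is top in the current remaining family. In particular, the same set of pairs (hence the same Forman gradient) and the same set of single (critical) simplices are produced. (Proposition 1, reverse direction.) -/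
open Finset

variable {α : Type*}

/-!
Along a coreduction-based sequence the remaining family `T` stays upward closed in `Σ`
(its complement is a subcomplex): a free simplex of `T`, and both simplices of a coreduction
pair `(σ, τ)` of `T`, have no proper face in `T`, since otherwise some `τ.erase x` would be an
immediate face of `τ` in `T` other than `σ`. When the reversed sequence reaches an operation
that removed simplices `A` from `T`, the family still present is `(Σ \ T) ∪ A`; by upward
closure every coface of `σ` in `Σ` lies in `T`, so the present cofaces of `σ` lie in `A`, which
makes the coboundary of `σ` equal to `{τ}` for a pair and empty for a single simplex.
-/

namespace Op

def simplices : Op α → Set (Finset α)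
  | .inl (σ, τ) => {σ, τ}
  | .inr σ => {σ}

end Op

def IsCoredStep (S : Set (Finset α)) : Op α → Prop
  | .inl (σ, τ) => CoredPair S σ τ
  | .inr σ => FreeSimplex S σ

def IsRedStep (S : Set (Finset α)) : Op α → Prop
  | .inl (σ, τ) => RedPair S σ τ
  | .inr σ => TopSimplex S σ

section Sequences

variable {S : Set (Finset α)} {o : Op α} {L : List (Op α)}

lemma removeOp_eq_diff (S : Set (Finset α)) (o : Op α) :
    removeOp S o = S \ Op.simplices o := by
  obtain ⟨σ, τ⟩ | σ := o <;> rfl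

lemma removeOp_diff_removeOp {T : Set (Finset α)} (h : Op.simplices o ⊆ T) :
    removeOp (S \ removeOp T o) o = S \ T := by
  ext ρ
  have := @h ρ
  simp only [removeOp_eq_diff, Set.mem_sdiff]
  tauto

lemma remaining_append (S : Set (Finset α)) (M N : List (Op α)) :
    remaining S (M ++ N) = remaining (remaining S M) N :=
  List.foldl_append

lemma isCoredSeq_cons :
    IsCoredSeq S (o :: L) ↔ IsCoredStep S o ∧ IsCoredSeq (removeOp S o) L := by
  obtain ⟨σ, τ⟩ | σ := o <;> rfl

lemma isRedSeq_cons : IsRedSeq S (o :: L) ↔ IsRedStep S o ∧ IsRedSeq (removeOp S o) L := by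
  obtain ⟨σ, τ⟩ | σ := o <;> rfl

lemma isRedSeq_singleton : IsRedSeq S [o] ↔ IsRedStep S o := by
  rw [isRedSeq_cons, IsRedSeq, and_true]

lemma isRedSeq_append (S : Set (Finset α)) (M N : List (Op α)) :
    IsRedSeq S (M ++ N) ↔ IsRedSeq S M ∧ IsRedSeq (remaining S M) N := by
  induction M generalizing S with
  | nil => simp [IsRedSeq, remaining]
  | cons o M ih =>
    simp only [List.cons_append, isRedSeq_cons, ih, and_assoc]
    rfl

lemma IsCoredStep.simplices_subset (h : IsCoredStep S o) : Op.simplices o ⊆ S := by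
  obtain ⟨σ, τ⟩ | σ := o
  · rintro _ (rfl | rfl)
    exacts [h.1, h.2.1]
  · rintro _ rfl
    exact h.1

end Sequences

lemma not_immFace_self (σ : Finset α) : ¬ ImmFace σ σ :=
  fun ⟨_, h⟩ => by omega

lemma cbd_pair {σ τ : Finset α} (h : ImmFace σ τ) : cbd {σ, τ} σ = {τ} := by
  ext ρ
  constructor
  · rintro ⟨rfl | rfl, hρ⟩
    exacts [absurd hρ (not_immFace_self ρ), rfl]
  · rintro rfl
    exact ⟨Or.inr rfl, h⟩

lemma cbd_singleton_self (σ : Finset α) : cbd {σ} σ = ∅ :=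
  Set.eq_empty_iff_forall_notMem.2 fun _ ⟨rfl, h⟩ => not_immFace_self _ h

section UpClosed

variable {S T : Set (Finset α)}

lemma UpClosedIn.refl (S : Set (Finset α)) : UpClosedIn S S :=
  ⟨subset_rfl, fun _ _ _ hτ _ => hτ⟩

lemma UpClosedIn.diff (hT : UpClosedIn S T) {A : Set (Finset α)}
    (hA : ∀ a ∈ A, ∀ ρ ∈ T, ρ ⊆ a → ρ ∈ A) : UpClosedIn S (T \ A) :=
  ⟨Set.sdiff_subset.trans hT.1, fun ρ ⟨hρT, hρA⟩ μ hμS hρμ =>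
    ⟨hT.2 ρ hρT μ hμS hρμ, fun hμA => hρA (hA μ hμA ρ hρT hρμ)⟩⟩

lemma erase_mem_bd [DecidableEq α] (hS : IsComplex S) (hT : UpClosedIn S T)
    {ρ τ : Finset α} {x : α} (hρ : ρ ∈ T) (hτ : τ ∈ S) (hρτ : ρ ⊆ τ) (hxτ : x ∈ τ)
    (hxρ : x ∉ ρ) : τ.erase x ∈ bd T τ := by
  have hρx : ρ ⊆ τ.erase x := fun y hy => Finset.mem_erase.2 ⟨fun h => hxρ (h ▸ hy), hρτ hy⟩
  have hxS : τ.erase x ∈ S :=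
    hS.2 τ hτ _ (Finset.erase_subset x τ) ((hS.1 ρ (hT.1 hρ)).mono hρx)
  exact ⟨hT.2 ρ hρ _ hxS hρx, Finset.erase_subset x τ, Finset.card_erase_add_one hxτ⟩

lemma eq_of_subset_of_bd_eq_empty (hS : IsComplex S) (hT : UpClosedIn S T) {ρ σ : Finset α}
    (hbd : bd T σ = ∅) (hσ : σ ∈ S) (hρ : ρ ∈ T) (hρσ : ρ ⊆ σ) : ρ = σ := by
  classical
  by_contra hne
  obtain ⟨x, hxσ, hxρ⟩ := Finset.exists_of_ssubset (hρσ.ssubset_of_ne hne)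
  have := erase_mem_bd hS hT hρ hσ hρσ hxσ hxρ
  rw [hbd] at this
  exact this

lemma eq_or_eq_of_subset_of_bd_eq_singleton (hS : IsComplex S) (hT : UpClosedIn S T)
    {ρ σ τ : Finset α} (hbd : bd T τ = {σ}) (hστ : ImmFace σ τ) (hτ : τ ∈ S) (hρ : ρ ∈ T)
    (hρτ : ρ ⊆ τ) : ρ = σ ∨ ρ = τ := by
  classical
  refine (eq_or_ne ρ τ).symm.imp_left fun hne => ?_
  have hσρ : σ ⊆ ρ := fun y hyσ => by
    by_contra hyρ
    have := erase_mem_bd hS hT hρ hτ hρτ (hστ.1 hyσ) hyρ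
    rw [hbd, Set.mem_singleton_iff] at this
    exact Finset.notMem_erase y τ (this ▸ hyσ)
  have := Finset.card_lt_card (hρτ.ssubset_of_ne hne)
  exact (Finset.eq_of_subset_of_card_le hσρ (by rw [← hστ.2] at this; omega)).symm

lemma UpClosedIn.removeOp (hS : IsComplex S) (hT : UpClosedIn S T) {o : Op α}
    (ho : IsCoredStep T o) : UpClosedIn S (removeOp T o) := by
  rw [removeOp_eq_diff]
  refine hT.diff ?_
  obtain ⟨σ, τ⟩ | σ := o
  · obtain ⟨-, hτT, hστ, hbd⟩ := ho
    rintro _ (rfl | rfl) ρ hρT hρa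
    · exact eq_or_eq_of_subset_of_bd_eq_singleton hS hT hbd hστ (hT.1 hτT) hρT
        (hρa.trans hστ.1)
    · exact eq_or_eq_of_subset_of_bd_eq_singleton hS hT hbd hστ (hT.1 hτT) hρT hρa
  · rintro _ rfl ρ hρT hρa
    exact eq_of_subset_of_bd_eq_empty hS hT ho.2 (hT.1 ho.1) hρT hρa

lemma cbd_diff_diff (hT : UpClosedIn S T) {A : Set (Finset α)} (hA : A ⊆ T) {σ : Finset α}
    (hσ : σ ∈ A) : cbd (S \ (T \ A)) σ = cbd A σ := by
  ext ρ
  constructor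
  · rintro ⟨⟨hρS, hρ⟩, hσρ⟩
    exact ⟨by_contra fun h => hρ ⟨hT.2 σ (hA hσ) ρ hρS hσρ.1, h⟩, hσρ⟩
  · rintro ⟨hρA, hσρ⟩
    exact ⟨⟨hT.1 (hA hρA), fun h => h.2 hρA⟩, hσρ⟩

lemma IsCoredStep.isRedStep_diff (hT : UpClosedIn S T) {o : Op α} (ho : IsCoredStep T o) :
    IsRedStep (S \ removeOp T o) o := by
  have hsub := ho.simplices_subset
  have hmem : ∀ ρ ∈ Op.simplices o, ρ ∈ S \ (T \ Op.simplices o) :=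
    fun ρ hρ => ⟨hT.1 (hsub hρ), fun h => h.2 hρ⟩
  rw [removeOp_eq_diff]
  obtain ⟨σ, τ⟩ | σ := o
  · exact ⟨hmem σ (Or.inl rfl), hmem τ (Or.inr rfl), ho.2.2.1,
      (cbd_diff_diff hT hsub (Or.inl rfl)).trans (cbd_pair ho.2.2.1)⟩
  · exact ⟨hmem σ rfl, (cbd_diff_diff hT hsub rfl).trans (cbd_singleton_self σ)⟩

lemma IsCoredSeq.reverse_isRedSeq (hS : IsComplex S) {L : List (Op α)} (hT : UpClosedIn S T)
    (hL : IsCoredSeq T L) (hex : remaining T L = ∅) :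
    IsRedSeq S L.reverse ∧ remaining S L.reverse = S \ T := by
  induction L generalizing T with
  | nil =>
    obtain rfl : T = ∅ := hex
    exact ⟨trivial, Set.sdiff_empty.symm⟩
  | cons o L ih =>
    rw [isCoredSeq_cons] at hL
    obtain ⟨hred, hrem⟩ := ih (hT.removeOp hS hL.1) hL.2 hex
    rw [List.reverse_cons, isRedSeq_append, remaining_append, hrem, isRedSeq_singleton]
    exact ⟨⟨hred, hL.1.isRedStep_diff hT⟩, removeOp_diff_removeOp hL.1.simplices_subset⟩

end UpClosed

theorem coreduction_seq_reverse_is_reduction_seq_general {α : Type*}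
    (S : Set (Finset α)) (hS : IsComplex S)
    (L : List (Op α)) (hL : IsCoredSeq S L) (hex : remaining S L = ∅) :
    IsRedSeq S L.reverse ∧ remaining S L.reverse = ∅ ∧
    (∀ p : Finset α × Finset α, Sum.inl p ∈ L.reverse ↔ Sum.inl p ∈ L) ∧
    (∀ σ : Finset α, Sum.inr σ ∈ L.reverse ↔ Sum.inr σ ∈ L) := by
  obtain ⟨hred, hrem⟩ := hL.reverse_isRedSeq hS (UpClosedIn.refl S) hex
  exact ⟨hred, hrem.trans Set.sdiff_self, fun _ => List.mem_reverse, fun _ => List.mem_reverse⟩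

/-- Proposition 1, reverse direction: the reverse of an exhausting coreduction-based
removal sequence on a finite simplicial complex is an exhausting reduction-based
removal sequence, producing the same set of pairs and of single (critical)
simplices. -/
theorem coreduction_seq_reverse_is_reduction_seq {α : Type*} [DecidableEq α]
    (S : Set (Finset α)) (hS : IsComplex S) (hfin : S.Finite)
    (L : List (Op α)) (hL : IsCoredSeq S L) (hex : remaining S L = ∅) :
    IsRedSeq S L.reverse ∧ remaining S L.reverse = ∅ ∧
    (∀ p : Finset α × Finset α, Sum.inl p ∈ L.reverse ↔ Sum.inl p ∈ L) ∧
    (∀ σ : Finset α, Sum.inr σ ∈ L.reverse ↔ Sum.inr σ ∈ L) :=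
  coreduction_seq_reverse_is_reduction_seq_general S hS L hL hex
end

section
/- Let Σ be a finite simplicial complex and let L be a valid interleaved removal sequence on Σ. Suppose the operation at step i removes a coreduction pair or a free simplex, and let Σ'_{i−1} and Σ'_i be the remaining families before and after step i. If (α, β) is a reduction pair in Σ'_i, then (α, β) was already a reduction pair in Σ'_{i−1}. (Remark 2, first part: in an interleaved-based algorithm, a coreduction pair or free simplex removal cannot make a reduction pair feasible.) -/
open Finset

variable {α : Type*}

/-! Along a valid interleaved sequence the remaining family `S'` stays convex for immediate
faces in `S` (`ImmConvexIn`): no removed simplex lies between a remaining simplex and a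
remaining immediate coface of it, because each simplex is free or top in what remains right
after its removal. For the lower simplex `σ` of a coreduction pair `(σ, τ)` this is where
convexity so far is used: a face `ρ ⋖ σ` in `S'` would give, by the diamond property,
some `γ ≠ σ` with `ρ ⋖ γ ⋖ τ`, which then lies in `S'` and contradicts `bd S' τ = {σ}`.
Consequently every remaining immediate face of a simplex removed by a coreduction or free
step is removed too, so that step changes no coboundary of a remaining simplex. -/

def Op.simplices_s14 : Op α → Set (Finset α)
  | Sum.inl (σ, τ) => {σ, τ}
  | Sum.inr σ => {σ}

lemma removeOp_eq_sdiff (S : Set (Finset α)) (o : Op α) : removeOp S o = S \ o.simplices_s14 := by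
  cases o <;> rfl

lemma remaining_take_succ (S : Set (Finset α)) {L : List (Op α)} {i : ℕ} {o : Op α}
    (hi : L[i]? = some o) :
    remaining S (L.take (i + 1)) = removeOp (remaining S (L.take i)) o := by
  rw [List.take_add_one, hi]
  simp only [remaining, Option.toList_some, List.foldl_append, List.foldl_cons, List.foldl_nil]

/-- The condition on a single operation in `IsInterSeq`. -/
def IsInterOp (S : Set (Finset α)) : Op α → Prop
  | Sum.inl (σ, τ) => CoredPair S σ τ ∨ RedPair S σ τ
  | Sum.inr σ => FreeSimplex S σ ∨ TopSimplex S σ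

lemma isInterSeq_cons {S : Set (Finset α)} {o : Op α} {L : List (Op α)} :
    IsInterSeq S (o :: L) ↔ IsInterOp S o ∧ IsInterSeq (removeOp S o) L := by
  cases o <;> rfl

lemma isInterSeq_take {S : Set (Finset α)} {L : List (Op α)} (h : IsInterSeq S L) (n : ℕ) :
    IsInterSeq S (L.take n) := by
  induction L generalizing S n with
  | nil => simpa using h
  | cons o L ih =>
    cases n with
    | zero => trivial
    | succ n => exact ⟨h.1, ih h.2 n⟩

lemma ImmFace.nonempty_right {ρ σ : Finset α} (h : ImmFace ρ σ) : σ.Nonempty :=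
  Finset.card_pos.mp (h.2 ▸ Nat.succ_pos _)

/-- The diamond property of the face poset of a simplex. -/
lemma ImmFace.exists_ne_between {ρ σ τ : Finset α} (hρσ : ImmFace ρ σ) (hστ : ImmFace σ τ) :
    ∃ γ, ImmFace ρ γ ∧ ImmFace γ τ ∧ γ ≠ σ := by
  classical
  obtain ⟨x, hxτ, hxσ⟩ := Finset.exists_of_ssubset
    (Finset.ssubset_iff_subset_ne.mpr ⟨hστ.1, by rintro rfl; exact absurd hστ.2 (by omega)⟩)
  have hxρ : x ∉ ρ := fun h => hxσ (hρσ.1 h)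
  have hcard : (insert x ρ).card = ρ.card + 1 := Finset.card_insert_of_notMem hxρ
  refine ⟨insert x ρ, ⟨Finset.subset_insert x ρ, hcard.symm⟩,
    ⟨Finset.insert_subset hxτ (hρσ.1.trans hστ.1), by rw [hcard, hρσ.2, hστ.2]⟩, ?_⟩
  rintro rfl
  exact hxσ (Finset.mem_insert_self x ρ)

lemma IsComplex.exists_ne_between {S : Set (Finset α)} (hS : IsComplex S) {ρ σ τ : Finset α}
    (hτ : τ ∈ S) (hρσ : ImmFace ρ σ) (hστ : ImmFace σ τ) :
    ∃ γ ∈ S, ImmFace ρ γ ∧ ImmFace γ τ ∧ γ ≠ σ := by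
  obtain ⟨γ, hργ, hγτ, hne⟩ := hρσ.exists_ne_between hστ
  exact ⟨γ, hS.2 τ hτ γ hγτ.1 hργ.nonempty_right, hργ, hγτ, hne⟩

def ImmConvexIn (S₀ S : Set (Finset α)) : Prop :=
  S ⊆ S₀ ∧ ∀ ρ γ τ, ρ ∈ S → τ ∈ S → γ ∈ S₀ → ImmFace ρ γ → ImmFace γ τ → γ ∈ S

lemma immConvexIn_self (S₀ : Set (Finset α)) : ImmConvexIn S₀ S₀ :=
  ⟨subset_rfl, fun _ _ _ _ _ hγ _ _ => hγ⟩

lemma ImmConvexIn.sdiff {S₀ S R : Set (Finset α)} (hconv : ImmConvexIn S₀ S)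
    (hR : ∀ γ ∈ R, bd S γ ⊆ R ∨ cbd S γ ⊆ R) : ImmConvexIn S₀ (S \ R) := by
  refine ⟨Set.sdiff_subset.trans hconv.1, fun ρ γ τ hρ hτ hγ hργ hγτ => ?_⟩
  refine ⟨hconv.2 ρ γ τ hρ.1 hτ.1 hγ hργ hγτ, fun hγR => ?_⟩
  rcases hR γ hγR with h | h
  · exact hρ.2 (h ⟨hρ.1, hργ⟩)
  · exact hτ.2 (h ⟨hτ.1, hγτ⟩)

lemma FreeSimplex.bd_subset {S : Set (Finset α)} {σ γ : Finset α} (h : FreeSimplex S σ)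
    (hγ : γ ∈ ({σ} : Set (Finset α))) : bd S γ ⊆ {σ} := by
  rw [Set.mem_singleton_iff.mp hγ, h.2]
  exact Set.empty_subset _

lemma TopSimplex.cbd_subset {S : Set (Finset α)} {σ γ : Finset α} (h : TopSimplex S σ)
    (hγ : γ ∈ ({σ} : Set (Finset α))) : cbd S γ ⊆ {σ} := by
  rw [Set.mem_singleton_iff.mp hγ, h.2]
  exact Set.empty_subset _

section Invariant

variable {S₀ S : Set (Finset α)} (hS : IsComplex S₀) (hconv : ImmConvexIn S₀ S)
include hS hconv

lemma CoredPair.bd_fst_eq_empty {σ τ : Finset α} (h : CoredPair S σ τ) : bd S σ = ∅ := by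
  refine Set.eq_empty_iff_forall_notMem.mpr fun ρ ⟨hρ, hρσ⟩ => ?_
  obtain ⟨γ, hγ, hργ, hγτ, hne⟩ := hS.exists_ne_between (hconv.1 h.2.1) hρσ h.2.2.1
  have hγbd : γ ∈ bd S τ := ⟨hconv.2 ρ γ τ hρ h.2.1 hγ hργ hγτ, hγτ⟩
  rw [h.2.2.2] at hγbd
  exact hne hγbd

lemma RedPair.cbd_snd_eq_empty {σ τ : Finset α} (h : RedPair S σ τ) : cbd S τ = ∅ := by
  refine Set.eq_empty_iff_forall_notMem.mpr fun t ⟨ht, hτt⟩ => ?_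
  obtain ⟨γ, hγ, hσγ, hγt, hne⟩ := hS.exists_ne_between (hconv.1 ht) h.2.2.1 hτt
  have hγcbd : γ ∈ cbd S σ := ⟨hconv.2 σ γ t h.1 ht hγ hσγ hγt, hσγ⟩
  rw [h.2.2.2] at hγcbd
  exact hne hγcbd

lemma CoredPair.bd_subset {σ τ γ : Finset α} (h : CoredPair S σ τ)
    (hγ : γ ∈ ({σ, τ} : Set (Finset α))) : bd S γ ⊆ {σ, τ} := by
  rcases hγ with rfl | rfl
  · simp [h.bd_fst_eq_empty hS hconv]
  · simp [h.2.2.2]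

lemma RedPair.cbd_subset {σ τ γ : Finset α} (h : RedPair S σ τ)
    (hγ : γ ∈ ({σ, τ} : Set (Finset α))) : cbd S γ ⊆ {σ, τ} := by
  rcases hγ with rfl | rfl
  · simp [h.2.2.2]
  · simp [h.cbd_snd_eq_empty hS hconv]

lemma IsInterOp.bd_or_cbd_subset {o : Op α} (ho : IsInterOp S o) {γ : Finset α}
    (hγ : γ ∈ o.simplices_s14) : bd S γ ⊆ o.simplices_s14 ∨ cbd S γ ⊆ o.simplices_s14 := by
  rcases o with ⟨σ, τ⟩ | σ
  · exact ho.imp (·.bd_subset hS hconv hγ) (·.cbd_subset hS hconv hγ)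
  · exact ho.imp (·.bd_subset hγ) (·.cbd_subset hγ)

end Invariant

lemma immConvexIn_remaining {S₀ : Set (Finset α)} (hS : IsComplex S₀) {L : List (Op α)} :
    ∀ {S : Set (Finset α)}, ImmConvexIn S₀ S → IsInterSeq S L →
      ImmConvexIn S₀ (remaining S L) := by
  induction L with
  | nil => exact fun hconv _ => hconv
  | cons o L ih =>
    intro S hconv hseq
    obtain ⟨ho, hseq⟩ := isInterSeq_cons.mp hseq
    refine ih ?_ hseq
    rw [removeOp_eq_sdiff]
    exact hconv.sdiff fun γ hγ => ho.bd_or_cbd_subset hS hconv hγ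

lemma cbd_sdiff_eq {S R : Set (Finset α)} {σ : Finset α} (hσ : σ ∈ S \ R)
    (hR : ∀ γ ∈ R, bd S γ ⊆ R) : cbd (S \ R) σ = cbd S σ := by
  ext τ
  refine ⟨fun ⟨hτ, hστ⟩ => ⟨hτ.1, hστ⟩, fun ⟨hτ, hστ⟩ => ⟨⟨hτ, fun hτR => ?_⟩, hστ⟩⟩
  exact hσ.2 (hR τ hτR ⟨hσ.1, hστ⟩)

lemma RedPair.of_sdiff {S R : Set (Finset α)} {σ τ : Finset α} (h : RedPair (S \ R) σ τ)
    (hR : ∀ γ ∈ R, bd S γ ⊆ R) : RedPair S σ τ :=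
  ⟨h.1.1, h.2.1.1, h.2.2.1, cbd_sdiff_eq h.1 hR ▸ h.2.2.2⟩

theorem coreduction_removal_no_new_reduction_general {α : Type*}
    (S : Set (Finset α)) (hS : IsComplex S)
    (L : List (Op α)) (hL : IsInterSeq S L)
    (i : ℕ) (o : Op α) (hi : L[i]? = some o)
    (hcase :
      (∃ σ' τ', o = Sum.inl (σ', τ') ∧ CoredPair (remaining S (L.take i)) σ' τ') ∨
      (∃ σ', o = Sum.inr σ' ∧ FreeSimplex (remaining S (L.take i)) σ'))
    (a b : Finset α) (hred : RedPair (remaining S (L.take (i + 1))) a b) :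
    RedPair (remaining S (L.take i)) a b := by
  have hconv : ImmConvexIn S (remaining S (L.take i)) :=
    immConvexIn_remaining hS (immConvexIn_self S) (isInterSeq_take hL i)
  rw [remaining_take_succ S hi, removeOp_eq_sdiff] at hred
  refine hred.of_sdiff fun γ hγ => ?_
  rcases hcase with ⟨σ, τ, rfl, h⟩ | ⟨σ, rfl, h⟩
  · exact h.bd_subset hS hconv hγ
  · exact h.bd_subset hγ

/-- Remark 2, first part: in an interleaved-based algorithm, removing a coreduction
pair or a free simplex cannot make a reduction pair feasible. -/
theorem coreduction_removal_no_new_reduction {α : Type*} [DecidableEq α]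
    (S : Set (Finset α)) (hS : IsComplex S) (hfin : S.Finite)
    (L : List (Op α)) (hL : IsInterSeq S L)
    (i : ℕ) (o : Op α) (hi : L[i]? = some o)
    (hcase :
      (∃ σ' τ', o = Sum.inl (σ', τ') ∧ CoredPair (remaining S (L.take i)) σ' τ') ∨
      (∃ σ', o = Sum.inr σ' ∧ FreeSimplex (remaining S (L.take i)) σ'))
    (a b : Finset α) (hred : RedPair (remaining S (L.take (i + 1))) a b) :
    RedPair (remaining S (L.take i)) a b :=
  coreduction_removal_no_new_reduction_general S hS L hL i o hi hcase a b hred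
end
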